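/- For every prime p with p ≥ 66 there exists t ∈ ℤ/pℤ such that t ∉ {−2, −1, 0, 1, 2, 3, 4}, 2t ∉ {−1, 1}, 3t ∉ {1, 2}, 4t ∉ {1, 3}, and ((t−9)(t−1)/p) = ((9t−1)(t−1)/p) = −1. -/

import Mathlib

/-!
Let `χ` be the quadratic character of a finite field of odd order `q`. For `a ≠ b` the substitution
`x = a + (b - a) y` turns `∑ₓ χ((x - a)(x - b))` into `χ(-1) J(χ, χ) = -1`. Hence for distinct
`a, b, c` the sum `∑ₜ (1 - χ((t - a)(t - c))) (1 - χ((t - b)(t - c)))` is at least `q + 1 + 1 - 2`,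
the cross term being `∑_{t ≠ c} χ((t - a)(t - b)) ≥ -2`. Each summand is `4` when both factors are
non-residues, at most `2` at the roots `a, b, c`, and `0` otherwise, so at least `(q - 6) / 4`
values of `t` make both non-residues. Since `χ(9) = 1`, the case `a = 9, b = 9⁻¹, c = 1` gives at
least `15` such `t` once `p ≥ 66`, more than the `13` values excluded by the linear conditions.
-/

/-- The Legendre symbol `(a / p)` of an element `a : ZMod p`. -/
def legSym (p : ℕ) [Fact p.Prime] (a : ZMod p) : ℤ := legendreSym p a.val

open Finset

section QuadraticCharSums

variable {F : Type*} [Field F] [Fintype F] [DecidableEq F]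

theorem quadraticChar_sum_mul_sub_sub (hF : ringChar F ≠ 2) {a b : F} (hab : a ≠ b) :
    ∑ x, quadraticChar F ((x - a) * (x - b)) = -1 := by
  set χ := quadraticChar F
  have hba : b - a ≠ 0 := sub_ne_zero.mpr hab.symm
  have hχ_neg_one : χ (-1) ^ 2 = 1 := quadraticChar_sq_one (neg_ne_zero.mpr one_ne_zero)
  have hsubst (y : F) : χ ((a + (b - a) * y - a) * (a + (b - a) * y - b)) =
      χ (-1) * (χ y * χ (1 - y)) := by
    rw [show (a + (b - a) * y - a) * (a + (b - a) * y - b) = -1 * (b - a) ^ 2 * (y * (1 - y)) by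
        ring, map_mul, map_mul, map_mul, quadraticChar_sq_one' hba, mul_one]
  calc ∑ x, χ ((x - a) * (x - b))
      = ∑ y, χ ((a + (b - a) * y - a) * (a + (b - a) * y - b)) :=
        (Fintype.sum_equiv ((Equiv.mulLeft₀ (b - a) hba).trans (Equiv.addLeft a)) _ _
          fun _ => rfl).symm
    _ = χ (-1) * jacobiSum χ χ⁻¹ := by
        rw [(quadraticChar_isQuadratic F).inv, jacobiSum, mul_sum]
        exact sum_congr rfl fun y _ => hsubst y
    _ = -1 := by
        rw [jacobiSum_nontrivial_inv (quadraticChar_ne_one hF)]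
        linear_combination -hχ_neg_one

theorem neg_two_le_sum_quadraticChar_mul (hF : ringChar F ≠ 2) {a b : F} (hab : a ≠ b) (c : F) :
    -2 ≤ ∑ t, quadraticChar F ((t - a) * (t - c)) * quadraticChar F ((t - b) * (t - c)) := by
  set χ := quadraticChar F
  have hterm (t : F) : χ ((t - a) * (t - c)) * χ ((t - b) * (t - c)) =
      χ ((t - a) * (t - b)) - if t = c then χ ((c - a) * (c - b)) else 0 := by
    split_ifs with h
    · simp [h, χ]
    · rw [← map_mul, show (t - a) * (t - c) * ((t - b) * (t - c)) = (t - a) * (t - b) * (t - c) ^ 2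
          by ring, map_mul, quadraticChar_sq_one' (sub_ne_zero.mpr h), mul_one, sub_zero]
  rw [sum_congr rfl fun t _ => hterm t, sum_sub_distrib, quadraticChar_sum_mul_sub_sub hF hab,
    sum_ite_eq' univ c, if_pos (mem_univ c)]
  rcases quadraticChar_isQuadratic F ((c - a) * (c - b)) with h | h | h <;> rw [h] <;> norm_num

def jointNonresidues (a b c : F) : Finset F :=
  {t | quadraticChar F ((t - a) * (t - c)) = -1 ∧ quadraticChar F ((t - b) * (t - c)) = -1}

lemma one_sub_mul_one_sub_le_of_isQuadratic {x y : ℤ} (hx : x = 0 ∨ x = 1 ∨ x = -1)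
    (hy : y = 0 ∨ y = 1 ∨ y = -1) :
    (1 - x) * (1 - y) ≤
      4 * (if x = -1 ∧ y = -1 then 1 else 0) + 2 * (if x = 0 ∨ y = 0 then 1 else 0) := by
  rcases hx with rfl | rfl | rfl <;> rcases hy with rfl | rfl | rfl <;> norm_num

theorem card_le_four_mul_card_jointNonresidues_add_six (hF : ringChar F ≠ 2) {a b c : F}
    (hab : a ≠ b) (hac : a ≠ c) (hbc : b ≠ c) :
    Fintype.card F ≤ 4 * #(jointNonresidues a b c) + 6 := by
  set u : F → ℤ := fun t => quadraticChar F ((t - a) * (t - c))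
  set v : F → ℤ := fun t => quadraticChar F ((t - b) * (t - c))
  have hzeros : #{t | u t = 0 ∨ v t = 0} ≤ 3 := by
    refine (card_le_card fun t ht => ?_).trans (card_le_three (a := a) (b := b) (c := c))
    simp only [mem_filter, mem_univ, true_and, u, v, quadraticChar_eq_zero_iff, mul_eq_zero,
      sub_eq_zero] at ht
    simp only [mem_insert, mem_singleton]
    tauto
  have hlower : (Fintype.card F : ℤ) ≤ ∑ t, (1 - u t) * (1 - v t) := by
    have hexpand (t : F) : (1 - u t) * (1 - v t) = 1 - u t - v t + u t * v t := by ring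
    rw [sum_congr rfl fun t _ => hexpand t, sum_add_distrib, sum_sub_distrib, sum_sub_distrib,
      sum_const, card_univ, nsmul_one, quadraticChar_sum_mul_sub_sub hF hac,
      quadraticChar_sum_mul_sub_sub hF hbc]
    linarith [neg_two_le_sum_quadraticChar_mul hF hab c]
  have hupper : ∑ t, (1 - u t) * (1 - v t) ≤
      4 * #(jointNonresidues a b c) + 2 * #{t | u t = 0 ∨ v t = 0} := by
    calc ∑ t, (1 - u t) * (1 - v t)
        ≤ ∑ t, (4 * (if u t = -1 ∧ v t = -1 then 1 else 0) +
            2 * (if u t = 0 ∨ v t = 0 then 1 else 0)) :=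
          sum_le_sum fun t _ => one_sub_mul_one_sub_le_of_isQuadratic
            (quadraticChar_isQuadratic F _) (quadraticChar_isQuadratic F _)
      _ = _ := by simp only [sum_add_distrib, ← mul_sum, sum_boole]; rfl
  have := hlower.trans hupper
  omega

end QuadraticCharSums

theorem exists_mem_forall_mul_notMem {M ι : Type*} [MonoidWithZero M] [IsLeftCancelMulZero M]
    [DecidableEq M] [Fintype ι] {S : Finset M} {k : ι → M} {A : ι → Finset M} (hk : ∀ i, k i ≠ 0)
    (hcard : ∑ i, #(A i) < #S) : ∃ t ∈ S, ∀ i, k i * t ∉ A i := by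
  set B := univ.biUnion fun i => {t ∈ S | k i * t ∈ A i}
  have hB : #B < #S := by
    refine (card_biUnion_le.trans (sum_le_sum fun i _ => ?_)).trans_lt hcard
    exact card_le_card_of_injOn (k i * ·) (fun t ht => (mem_filter.mp ht).2)
      ((mul_right_injective₀ (hk i)).injOn)
  obtain ⟨t, htS, htB⟩ := exists_mem_notMem_of_card_lt_card hB
  exact ⟨t, htS, fun i hi => htB (mem_biUnion.mpr ⟨i, mem_univ i, mem_filter.mpr ⟨htS, hi⟩⟩)⟩

theorem legSym_eq_quadraticChar (p : ℕ) [Fact p.Prime] (a : ZMod p) :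
    legSym p a = quadraticChar (ZMod p) a := by
  rw [legSym, legendreSym, Int.cast_natCast, ZMod.natCast_zmod_val]

theorem ZMod.natCast_ne_zero_of_lt {p n : ℕ} (hn : n ≠ 0) (hnp : n < p) : (n : ZMod p) ≠ 0 := by
  rw [Ne, ZMod.natCast_eq_zero_iff]
  exact Nat.not_dvd_of_pos_of_lt (Nat.pos_of_ne_zero hn) hnp

theorem exists_t_for_seven_p (p : ℕ) [Fact p.Prime] (hp : 66 ≤ p) :
    ∃ t : ZMod p, t ∉ ({-2, -1, 0, 1, 2, 3, 4} : Set (ZMod p)) ∧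
      2 * t ∉ ({-1, 1} : Set (ZMod p)) ∧
      3 * t ∉ ({1, 2} : Set (ZMod p)) ∧
      4 * t ∉ ({1, 3} : Set (ZMod p)) ∧
      legSym p ((t - 9) * (t - 1)) = -1 ∧ legSym p ((9 * t - 1) * (t - 1)) = -1 := by
  have hsmall (n : ℕ) (hn : n ≠ 0) (h66 : n < 66) : (n : ZMod p) ≠ 0 :=
    ZMod.natCast_ne_zero_of_lt hn (h66.trans_le hp)
  have h2 : (2 : ZMod p) ≠ 0 := by exact_mod_cast hsmall 2 (by norm_num) (by norm_num)
  have h3 : (3 : ZMod p) ≠ 0 := by exact_mod_cast hsmall 3 (by norm_num) (by norm_num)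
  have h4 : (4 : ZMod p) ≠ 0 := by exact_mod_cast hsmall 4 (by norm_num) (by norm_num)
  have h5 : (5 : ZMod p) ≠ 0 := by exact_mod_cast hsmall 5 (by norm_num) (by norm_num)
  have h9 : (9 : ZMod p) * 9⁻¹ = 1 :=
    mul_inv_cancel₀ (by exact_mod_cast hsmall 9 (by norm_num) (by norm_num))
  have h91 : (9 : ZMod p) ≠ 1 := fun h => pow_ne_zero 3 h2 (by linear_combination h)
  have h9inv : (9 : ZMod p) ≠ 9⁻¹ := fun h =>
    mul_ne_zero (pow_ne_zero 4 h2) h5 (by linear_combination 9 * h + h9)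
  have hS : 15 ≤ #(jointNonresidues (9 : ZMod p) 9⁻¹ 1) := by
    have := card_le_four_mul_card_jointNonresidues_add_six
      (by rw [ZMod.ringChar_zmod_n]; omega) h9inv h91 (inv_ne_one.mpr h91)
    rw [ZMod.card] at this
    omega
  set A : Fin 4 → Finset (ZMod p) := ![{-2, -1, 0, 1, 2, 3, 4}, {-1, 1}, {1, 2}, {1, 3}]
  have hA : ∑ i, #(A i) ≤ 13 := by
    have h7 : #({-2, -1, 0, 1, 2, 3, 4} : Finset (ZMod p)) ≤ 7 :=
      (card_insert_le _ _).trans (Nat.succ_le_succ card_le_six)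
    simp only [A, Fin.sum_univ_four, Matrix.cons_val]
    linarith [card_le_two (a := (-1 : ZMod p)) (b := 1), card_le_two (a := (1 : ZMod p)) (b := 2),
      card_le_two (a := (1 : ZMod p)) (b := 3)]
  obtain ⟨t, ht, hbad⟩ := exists_mem_forall_mul_notMem (A := A)
    (S := jointNonresidues (9 : ZMod p) 9⁻¹ 1) (k := ![1, 2, 3, 4])
    (by simp [Fin.forall_fin_succ, h2, h3, h4]) (hA.trans_lt (by omega))
  obtain ⟨hf, hg⟩ := (mem_filter.mp ht).2
  refine ⟨t, by simpa [A] using hbad 0, by simpa [A] using hbad 1, by simpa [A] using hbad 2,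
    by simpa [A] using hbad 3, by rwa [legSym_eq_quadraticChar], ?_⟩
  rwa [legSym_eq_quadraticChar, show (9 * t - 1) * (t - 1) = 3 ^ 2 * ((t - 9⁻¹) * (t - 1)) by
    linear_combination (t - 1) * h9, map_mul, quadraticChar_sq_one' h3, one_mul]
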